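/- arXiv:1312.4567 — 2 statements merged into one kernel-verified Lean document; each statement's English description precedes it below -/
import Mathlib

section
/- For every n ≥ 2, the product 𝔥_{2n+1} × ℝ of the (2n+1)-dimensional Heisenberg Lie algebra with the 1-dimensional abelian Lie algebra admits no symplectic structure. -/
/-!
The central element `Z = (X₁, 0)` is `ω`-orthogonal to everything. Indeed, if `⁅x, y⁆ = Z` and `z`
commutes with `x` and `y`, the cocycle identity for `x, y, z` reduces to `ω Z z = 0`; and for
`n ≥ 2` every basis vector of `𝔥_{2n+1} × ℝ` commutes with one of the pairs `X₂, X₃` and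
`X₄, X₅`, whose brackets are both `X₁`. So `Z ≠ 0` lies in the radical of `ω`.
-/

/-- The componentwise Lie ring structure on the product of two Lie rings. -/
instance prodLieRing (L M : Type*) [LieRing L] [LieRing M] : LieRing (L × M) where
  bracket x y := (⁅x.1, y.1⁆, ⁅x.2, y.2⁆)
  add_lie x y z := by
    show (⁅x.1 + y.1, z.1⁆, ⁅x.2 + y.2, z.2⁆) = _
    simp [add_lie, Prod.ext_iff]
  lie_add x y z := by
    show (⁅x.1, y.1 + z.1⁆, ⁅x.2, y.2 + z.2⁆) = _
    simp [lie_add, Prod.ext_iff]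
  lie_self x := by
    show (⁅x.1, x.1⁆, ⁅x.2, x.2⁆) = (0, 0)
    simp
  leibniz_lie x y z := by
    show (⁅x.1, ⁅y.1, z.1⁆⁆, ⁅x.2, ⁅y.2, z.2⁆⁆) = _
    simp only [Prod.ext_iff]
    constructor <;> exact leibniz_lie _ _ _

/-- The componentwise Lie algebra structure on the product of two Lie algebras. -/
instance prodLieAlgebra (R L M : Type*) [CommRing R] [LieRing L] [LieRing M]
    [LieAlgebra R L] [LieAlgebra R M] : LieAlgebra R (L × M) :=
  { (inferInstance : Module R (L × M)) with
    lie_smul := fun t x y => by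
      show (⁅x.1, (t • y).1⁆, ⁅x.2, (t • y).2⁆) = t • (⁅x.1, y.1⁆, ⁅x.2, y.2⁆)
      simp [Prod.smul_def, Prod.ext_iff] }

/-- A 2-cocycle on a real Lie algebra `L`: an alternating (hence skew-symmetric) bilinear
form `ω` such that `ω ⁅x,y⁆ z + ω ⁅y,z⁆ x + ω ⁅z,x⁆ y = 0` for all `x y z`. -/
def IsCocycle {L : Type*} [LieRing L] [LieAlgebra ℝ L]
    (ω : L →ₗ[ℝ] L →ₗ[ℝ] ℝ) : Prop :=
  (∀ x, ω x x = 0) ∧ ∀ x y z, ω ⁅x, y⁆ z + ω ⁅y, z⁆ x + ω ⁅z, x⁆ y = 0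

/-- A symplectic structure on a real Lie algebra: a nondegenerate 2-cocycle. -/
def IsSymplecticForm {L : Type*} [LieRing L] [LieAlgebra ℝ L]
    (ω : L →ₗ[ℝ] L →ₗ[ℝ] ℝ) : Prop :=
  IsCocycle ω ∧ ∀ x, (∀ y, ω x y = 0) → x = 0

/-- `b` is a Heisenberg basis of `L` (so `L ≅ 𝔥_{2n+1}`): writing `X k = b (k-1)`
(`b` is 0-indexed), the only nonzero brackets of basis vectors are
`⁅X_{2i}, X_{2i+1}⁆ = X₁ = -⁅X_{2i+1}, X_{2i}⁆` for `i = 1, …, n`. -/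
def IsHeisenbergBasis {n : ℕ} {L : Type*} [LieRing L] [LieAlgebra ℝ L]
    (b : Module.Basis (Fin (2 * n + 1)) ℝ L) : Prop :=
  ∀ i j : Fin (2 * n + 1),
    ⁅b i, b j⁆ =
      if (i : ℕ) % 2 = 1 ∧ (j : ℕ) = (i : ℕ) + 1 then b 0
      else if (j : ℕ) % 2 = 1 ∧ (i : ℕ) = (j : ℕ) + 1 then -(b 0)
      else 0

attribute [local instance] LieRing.ofAssociativeRing

theorem IsCocycle.apply_lie_eq_zero {M : Type*} [LieRing M] [LieAlgebra ℝ M]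
    {ω : M →ₗ[ℝ] M →ₗ[ℝ] ℝ} (hω : IsCocycle ω) {x y z : M}
    (hyz : ⁅y, z⁆ = 0) (hzx : ⁅z, x⁆ = 0) : ω ⁅x, y⁆ z = 0 := by
  simpa [hyz, hzx] using hω.2 x y z

namespace IsHeisenbergBasis

variable {n : ℕ} {L : Type*} [LieRing L] [LieAlgebra ℝ L]
  {b : Module.Basis (Fin (2 * n + 1)) ℝ L}

theorem lie_odd_succ (hb : IsHeisenbergBasis b) (k : ℕ) (hk : k < n) :
    ⁅b ⟨2 * k + 1, by omega⟩, b ⟨2 * k + 2, by omega⟩⁆ = b 0 := by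
  rw [hb, if_pos ⟨by simp [Nat.add_mod], rfl⟩]

/-- `(i + 1) / 2` is the index `k` of the pair `X_{2k}, X_{2k+1}` containing `b i = X_{i+1}`,
with `0` for the centre. -/
theorem lie_eq_zero (hb : IsHeisenbergBasis b) {i j : Fin (2 * n + 1)}
    (hij : ((i : ℕ) + 1) / 2 ≠ ((j : ℕ) + 1) / 2) : ⁅b i, b j⁆ = 0 := by
  rw [hb, if_neg (by omega), if_neg (by omega)]

theorem exists_commuting_pair_lie_eq (hn : 2 ≤ n) (hb : IsHeisenbergBasis b)
    (i : Fin (2 * n + 1)) :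
    ∃ x y : L, ⁅x, y⁆ = b 0 ∧ ⁅y, b i⁆ = 0 ∧ ⁅b i, x⁆ = 0 := by
  obtain ⟨k, hk, hik⟩ : ∃ k < n, ((i : ℕ) + 1) / 2 ≠ k + 1 :=
    if h : ((i : ℕ) + 1) / 2 = 1 then ⟨1, by omega, by omega⟩ else ⟨0, by omega, h⟩
  exact ⟨_, _, hb.lie_odd_succ k hk, hb.lie_eq_zero (by dsimp only; omega),
    hb.lie_eq_zero (by dsimp only; omega)⟩

theorem cocycle_prod_center_eq_zero (hn : 2 ≤ n) (hb : IsHeisenbergBasis b)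
    {A : Type*} [LieRing A] [LieAlgebra ℝ A] [IsLieAbelian A]
    {ω : (L × A) →ₗ[ℝ] (L × A) →ₗ[ℝ] ℝ} (hω : IsCocycle ω) : ω (b 0, 0) = 0 := by
  have h_inl : (ω (b 0, 0)).comp (LinearMap.inl ℝ L A) = 0 := by
    refine b.ext fun i ↦ ?_
    obtain ⟨x, y, hxy, hyi, hix⟩ := hb.exists_commuting_pair_lie_eq hn i
    simpa [hxy] using
      hω.apply_lie_eq_zero (x := (x, 0)) (y := (y, 0)) (z := (b i, 0))
        (by simp [hyi]) (by simp [hix])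
  have h_inr : (ω (b 0, 0)).comp (LinearMap.inr ℝ L A) = 0 := by
    ext a
    obtain ⟨x, y, hxy, -, -⟩ := hb.exists_commuting_pair_lie_eq hn 0
    simpa [hxy] using
      hω.apply_lie_eq_zero (x := (x, 0)) (y := (y, 0)) (z := (0, a))
        (by simp) (by simp)
  exact LinearMap.prod_ext (h_inl.trans (LinearMap.zero_comp _).symm)
    (h_inr.trans (LinearMap.zero_comp _).symm)

end IsHeisenbergBasis

/-- For every `n ≥ 2`, the product `𝔥_{2n+1} × ℝ` of the `(2n+1)`-dimensional Heisenberg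
Lie algebra with the 1-dimensional abelian Lie algebra admits no symplectic structure. -/
theorem heisenberg_prod_real_no_symplectic
    {n : ℕ} (hn : 2 ≤ n)
    {L : Type*} [LieRing L] [LieAlgebra ℝ L]
    (b : Module.Basis (Fin (2 * n + 1)) ℝ L) (hb : IsHeisenbergBasis b) :
    ¬ ∃ ω : (L × ℝ) →ₗ[ℝ] (L × ℝ) →ₗ[ℝ] ℝ, IsSymplecticForm ω := by
  rintro ⟨ω, hcocycle, hnondeg⟩
  have : IsLieAbelian ℝ := isMulCommutative_iff_isLieAbelian.mp inferInstance
  have hcentre : ω (b 0, 0) = 0 := hb.cocycle_prod_center_eq_zero hn hcocycle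
  have hb0 : ((b 0, 0) : L × ℝ) = 0 := hnondeg _ fun v ↦ by simp [hcentre]
  exact b.ne_zero 0 (congrArg Prod.fst hb0)
end

section
/- Let 𝔤 be the 7-dimensional nilpotent real Lie algebra (13457C) with basis X₁, …, X₇ and nonzero brackets [X₁,X₂]=X₃, [X₁,X₃]=X₄, [X₁,X₄]=X₅, [X₁,X₆]=X₇, [X₂,X₅]=X₇, [X₃,X₄]=−X₇. Then X₇ lies in the radical of every 2-cocycle on 𝔤: if ω is a 2-cocycle on 𝔤, then ω(X₇, v) = 0 for every v ∈ 𝔤. -/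
/-- `b` is a basis of `L` exhibiting it as the 7-dimensional nilpotent Lie algebra (13457C)
from Gong's classification: writing `X k = b (k-1)`, the only nonzero brackets are
`⁅X₁,X₂⁆ = X₃`, `⁅X₁,X₃⁆ = X₄`, `⁅X₁,X₄⁆ = X₅`, `⁅X₁,X₆⁆ = X₇`, `⁅X₂,X₅⁆ = X₇`,
`⁅X₃,X₄⁆ = -X₇`, together with those forced by antisymmetry. -/
def Is13457CBasis {L : Type*} [LieRing L] [LieAlgebra ℝ L] (b : Module.Basis (Fin 7) ℝ L) : Prop :=
  ∀ i j : Fin 7,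
    ⁅b i, b j⁆ =
      if i = 0 ∧ j = 1 then b 2 else if i = 1 ∧ j = 0 then -(b 2)
      else if i = 0 ∧ j = 2 then b 3 else if i = 2 ∧ j = 0 then -(b 3)
      else if i = 0 ∧ j = 3 then b 4 else if i = 3 ∧ j = 0 then -(b 4)
      else if i = 0 ∧ j = 5 then b 6 else if i = 5 ∧ j = 0 then -(b 6)
      else if i = 1 ∧ j = 4 then b 6 else if i = 4 ∧ j = 1 then -(b 6)
      else if i = 2 ∧ j = 3 then -(b 6) else if i = 3 ∧ j = 2 then b 6
      else 0

/-!
Since `X₇ = ⁅X₂, X₅⁆ = -⁅X₃, X₄⁆`, the cocycle identity for `(X₂, X₅, Xⱼ)` or `(X₃, X₄, Xⱼ)`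
reduces to `ω(X₇, Xⱼ) = 0` as soon as `Xⱼ` commutes with both elements of the pair, which
covers every `j ≠ 1`. For `j = 1` the same two identities give
`ω(X₇, X₁) = -ω(X₃, X₅)` and `ω(X₇, X₁) = ω(X₃, X₅)`.
-/

namespace IsCocycle

variable {L : Type*} [LieRing L] [LieAlgebra ℝ L] {ω : L →ₗ[ℝ] L →ₗ[ℝ] ℝ}

theorem isAlt (hω : IsCocycle ω) : ω.IsAlt := hω.1

theorem apply_lie_eq_zero_s7 (hω : IsCocycle ω) {x y z : L} (hyz : ⁅y, z⁆ = 0)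
    (hzx : ⁅z, x⁆ = 0) : ω ⁅x, y⁆ z = 0 := by
  simpa [hyz, hzx] using hω.2 x y z

end IsCocycle

namespace Is13457CBasis

variable {L : Type*} [LieRing L] [LieAlgebra ℝ L] {b : Module.Basis (Fin 7) ℝ L}
  {ω : L →ₗ[ℝ] L →ₗ[ℝ] ℝ}

theorem cocycle_apply_X7_of_ne_zero (hb : Is13457CBasis b) (hω : IsCocycle ω) {j : Fin 7}
    (hj : j ≠ 0) : ω (b 6) (b j) = 0 := by
  unfold Is13457CBasis at hb
  fin_cases j
  · exact absurd rfl hj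
  · simpa [hb] using
      hω.apply_lie_eq_zero_s7 (x := b 2) (y := b 3) (z := b 1) (by simp [hb]) (by simp [hb])
  · simpa [hb] using
      hω.apply_lie_eq_zero_s7 (x := b 1) (y := b 4) (z := b 2) (by simp [hb]) (by simp [hb])
  · simpa [hb] using
      hω.apply_lie_eq_zero_s7 (x := b 1) (y := b 4) (z := b 3) (by simp [hb]) (by simp [hb])
  · simpa [hb] using
      hω.apply_lie_eq_zero_s7 (x := b 2) (y := b 3) (z := b 4) (by simp [hb]) (by simp [hb])
  · simpa [hb] using
      hω.apply_lie_eq_zero_s7 (x := b 1) (y := b 4) (z := b 5) (by simp [hb]) (by simp [hb])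
  · exact hω.isAlt.self_eq_zero _

theorem cocycle_apply_X7_X1 (hb : Is13457CBasis b) (hω : IsCocycle ω) :
    ω (b 6) (b 0) = 0 := by
  have h₂₅₁ := hω.2 (b 1) (b 4) (b 0)
  have h₃₄₁ := hω.2 (b 2) (b 3) (b 0)
  unfold Is13457CBasis at hb
  simp [hb, hω.isAlt.self_eq_zero] at h₂₅₁ h₃₄₁
  linarith [hω.isAlt.neg (b 4) (b 2)]

end Is13457CBasis

/-- In the 7-dimensional nilpotent Lie algebra (13457C), the basis element `X₇ = b 6`
lies in the radical of every 2-cocycle. -/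
theorem lie13457C_X7_in_radical_of_cocycle
    {L : Type*} [LieRing L] [LieAlgebra ℝ L]
    (b : Module.Basis (Fin 7) ℝ L) (hb : Is13457CBasis b)
    (ω : L →ₗ[ℝ] L →ₗ[ℝ] ℝ) (hω : IsCocycle ω) :
    ∀ v : L, ω (b 6) v = 0 := by
  suffices ω (b 6) = 0 by simp [this]
  refine b.ext fun j => ?_
  by_cases hj : j = 0
  · subst hj
    exact hb.cocycle_apply_X7_X1 hω
  · exact hb.cocycle_apply_X7_of_ne_zero hω hj
end
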